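/- arXiv:1810.06291 — 2 statements merged into one kernel-verified Lean document; each statement's English description precedes it below -/
import Mathlib

section
/- Let P be a strongly/strictly stochastically transitive bucket distribution on S_n with K* and λ* as above. Then for any bucket order C with P ∈ 𝐏_C and C ≠ C*^{(K*,λ*)}, the dimension d_C = Π_k (#C_k)! − 1 satisfies d_C > d_{C*^{(K*,λ*)}}. -/
/-
Since `P(σ i < σ j) + P(σ j < σ i) = 1`, two bucket orders admissible for `P` never rank a pair
in opposite strict order. Hence the lexicographic refinement of two admissible bucket orders is
again admissible, and the maximality of `K*` forces every admissible bucket order `C` to be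
constant on the buckets of `C*`: `C` arises from `C*` by merging adjacent buckets. If `C ≠ C*`,
two buckets of sizes `a, c ≥ 1` get merged, and `a! c! < (a + c)!` makes `d_C > d_{C*}`.
-/

open Finset
open scoped Classical

/-- Pairwise marginal `p_{i,j} = P(σ(i) < σ(j))`. -/
def pairwiseMarginal {n : ℕ} (P : Equiv.Perm (Fin n) → ℝ) (i j : Fin n) : ℝ :=
  ∑ σ : Equiv.Perm (Fin n), if σ i < σ j then P σ else 0

/-- `P` belongs to `𝐏_C` for the bucket order encoded by `b`. -/
def MemBucketClass {n K : ℕ} (P : Equiv.Perm (Fin n) → ℝ)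
    (b : Fin n → Fin K) : Prop :=
  ∀ i j, b i < b j → pairwiseMarginal P j i = 0

/-- Dimension `d_C = Π_k (#C_k)! - 1` of the class of bucket distributions
associated to the bucket order encoded by `b`. -/
def bucketDim {n K : ℕ} (b : Fin n → Fin K) : ℕ :=
  (∏ k : Fin K, ((Finset.univ.filter (fun i => b i = k)).card).factorial) - 1

open scoped Nat

theorem Nat.factorial_mul_factorial_lt_factorial_add {a c : ℕ} (ha : 0 < a) (hc : 0 < c) :
    a ! * c ! < (a + c)! := by
  obtain ⟨c, rfl⟩ := Nat.exists_eq_add_one_of_ne_zero hc.ne'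
  calc a ! * (c + 1)! = (c + 1) * (a ! * c !) := by rw [Nat.factorial_succ]; ring
    _ ≤ (c + 1) * (a + c)! :=
        Nat.mul_le_mul_left _ (Nat.le_of_dvd (Nat.factorial_pos _)
          (Nat.factorial_mul_factorial_dvd_factorial_add a c))
    _ < (a + c + 1) * (a + c)! :=
        Nat.mul_lt_mul_of_pos_right (by omega) (Nat.factorial_pos _)
    _ = (a + (c + 1))! := by rw [← add_assoc, Nat.factorial_succ]

theorem Nat.prod_factorial_lt_factorial_sum {ι : Type*} {s : Finset ι} {f : ι → ℕ}
    {i j : ι} (hi : i ∈ s) (hj : j ∈ s) (hij : i ≠ j) (hfi : 0 < f i) (hfj : 0 < f j) :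
    ∏ k ∈ s, (f k)! < (∑ k ∈ s, f k)! := by
  have hj' : j ∈ s.erase i := mem_erase.mpr ⟨hij.symm, hj⟩
  have hrest : 0 < ∑ k ∈ s.erase i, f k :=
    lt_of_lt_of_le hfj (single_le_sum (fun _ _ => Nat.zero_le _) hj')
  calc ∏ k ∈ s, (f k)! = (f i)! * ∏ k ∈ s.erase i, (f k)! := (mul_prod_erase s _ hi).symm
    _ ≤ (f i)! * (∑ k ∈ s.erase i, f k)! :=
        Nat.mul_le_mul_left _ (Nat.le_of_dvd (Nat.factorial_pos _)
          (Nat.prod_factorial_dvd_factorial_sum _ _))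
    _ < (f i + ∑ k ∈ s.erase i, f k)! := Nat.factorial_mul_factorial_lt_factorial_add hfi hrest
    _ = (∑ k ∈ s, f k)! := by rw [add_sum_erase s f hi]

theorem Finset.card_filter_comp_eq_sum_card_filter {ι κ μ : Type*} [Fintype ι]
    [Fintype κ] [DecidableEq κ] [DecidableEq μ] {f : ι → κ} {g : κ → μ} (t : μ) :
    #{x | g (f x) = t} = ∑ k ∈ {k | g k = t}, #{x | f x = k} := by
  rw [card_eq_sum_card_fiberwise (f := f) (t := {k | g k = t}) (by intro x; simp)]
  refine sum_congr rfl fun k hk => ?_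
  rw [filter_filter]
  congr 1
  ext x
  simp only [mem_filter, mem_univ, true_and, and_iff_right_iff_imp]
  rintro rfl
  exact (mem_filter.mp hk).2

theorem Function.FactorsThrough.prod_factorial_card_fiber_lt {ι κ μ : Type*} [Fintype ι]
    [Fintype κ] [Fintype μ] [DecidableEq κ] [DecidableEq μ] {f : ι → κ} {h : ι → μ}
    (hfac : h.FactorsThrough f) (hf : Function.Surjective f) {i j : ι} (hij : f i ≠ f j)
    (hh : h i = h j) :
    ∏ k, (#{x | f x = k})! < ∏ t, (#{x | h x = t})! := by
  let g : κ → μ := fun k => h (Function.surjInv hf k)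
  have hg : ∀ x, h x = g (f x) := fun x => hfac (Function.surjInv_eq hf (f x)).symm
  have hpos : ∀ k, 0 < #{x | f x = k} := fun k => by
    obtain ⟨x, rfl⟩ := hf k
    exact card_pos.mpr ⟨x, by simp⟩
  calc ∏ k, (#{x | f x = k})! = ∏ t, ∏ k ∈ {k | g k = t}, (#{x | f x = k})! :=
        (prod_fiberwise univ g _).symm
    _ < ∏ t, (∑ k ∈ {k | g k = t}, #{x | f x = k})! :=
        prod_lt_prod (fun _ _ => prod_pos fun _ _ => Nat.factorial_pos _)
          (fun _ _ => Nat.le_of_dvd (Nat.factorial_pos _)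
            (Nat.prod_factorial_dvd_factorial_sum _ _))
          ⟨g (f i), mem_univ _, Nat.prod_factorial_lt_factorial_sum (by simp)
            (by simp [← hg, hh]) hij (hpos _) (hpos _)⟩
    _ = ∏ t, (#{x | h x = t})! := by
        simp only [hg, card_filter_comp_eq_sum_card_filter]

theorem exists_surjective_fin_lt_iff {ι α : Type*} [Fintype ι] [LinearOrder α] (f : ι → α) :
    ∃ r : ι → Fin #(univ.image f), Function.Surjective r ∧
      ∀ x y, r x < r y ↔ f x < f y := by
  let e := (univ.image f).orderIsoOfFin rfl
  refine ⟨fun x => e.symm ⟨f x, mem_image_of_mem f (mem_univ x)⟩, fun t => ?_,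
    fun x y => by simp only [e.symm.lt_iff_lt, Subtype.mk_lt_mk]⟩
  obtain ⟨x, -, hx⟩ := mem_image.mp (e t).2
  exact ⟨x, by simp only [hx, Subtype.coe_eta, OrderIso.symm_apply_apply]⟩

theorem Function.FactorsThrough.exists_ne_eq_of_not_lt_iff {ι α β : Type*} [LinearOrder α]
    [LinearOrder β] {f : ι → α} {h : ι → β} (hfac : h.FactorsThrough f)
    (hmono : ∀ i j, f i < f j → h i ≤ h j) (hne : ¬ ∀ i j, h i < h j ↔ f i < f j) :
    ∃ i j, f i ≠ f j ∧ h i = h j := by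
  by_contra! hinj
  refine hne fun i j => ⟨fun hlt => ?_, fun hlt => (hmono i j hlt).lt_of_ne (hinj i j hlt.ne)⟩
  by_contra! hge
  rcases hge.eq_or_lt with heq | hlt'
  · exact hlt.ne (hfac heq.symm)
  · exact (hmono j i hlt').not_gt hlt

section BucketOrder

variable {n : ℕ} {P : Equiv.Perm (Fin n) → ℝ}

theorem pairwiseMarginal_add_pairwiseMarginal_swap (hP1 : ∑ σ : Equiv.Perm (Fin n), P σ = 1)
    {i j : Fin n} (hij : i ≠ j) : pairwiseMarginal P i j + pairwiseMarginal P j i = 1 := by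
  rw [pairwiseMarginal, pairwiseMarginal, ← sum_add_distrib, ← hP1]
  refine sum_congr rfl fun σ _ => ?_
  rcases (σ.injective.ne hij).lt_or_gt with h | h
  · rw [if_pos h, if_neg h.asymm, add_zero]
  · rw [if_neg h.asymm, if_pos h, zero_add]

theorem MemBucketClass.le_of_lt (hP1 : ∑ σ : Equiv.Perm (Fin n), P σ = 1) {K K' : ℕ}
    {b : Fin n → Fin K} {b' : Fin n → Fin K'} (hb : MemBucketClass P b)
    (hb' : MemBucketClass P b') {i j : Fin n} (h : b i < b j) : b' i ≤ b' j := by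
  by_contra! h'
  have hsum := pairwiseMarginal_add_pairwiseMarginal_swap hP1 (ne_of_apply_ne b h.ne)
  rw [hb i j h, hb' j i h'] at hsum
  norm_num at hsum

theorem MemBucketClass.factorsThrough_of_maximal {Kstar K : ℕ} {b : Fin n → Fin K}
    {bstar : Fin n → Fin Kstar} (hb : MemBucketClass P b)
    (hmax : Kstar ∈ upperBounds {K : ℕ | ∃ b : Fin n → Fin K,
      Function.Surjective b ∧ MemBucketClass P b})
    (hbstar_surj : Function.Surjective bstar) (hbstar : MemBucketClass P bstar) :
    b.FactorsThrough bstar := by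
  intro i j hij
  by_contra hne
  let key : Fin n → Fin Kstar ×ₗ Fin K := fun x => toLex (bstar x, b x)
  obtain ⟨r, hr_surj, hr⟩ := exists_surjective_fin_lt_iff key
  have hr_mem : MemBucketClass P r := fun x y hxy => by
    rcases Prod.Lex.lt_iff.mp ((hr x y).mp hxy) with h | ⟨-, h⟩
    exacts [hbstar x y h, hb x y h]
  let fst : Fin Kstar ×ₗ Fin K → Fin Kstar := fun p => (ofLex p).1
  have hproj : (univ.image key).image fst = univ := by
    rw [image_image]; exact image_univ_of_surjective hbstar_surj
  have hnot_inj : ¬ Set.InjOn fst (univ.image key : Set _) :=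
    fun hinj => hne (congrArg (fun p : Fin Kstar ×ₗ Fin K => (ofLex p).2)
      (hinj (x₁ := key i) (x₂ := key j) (by simp) (by simp) hij))
  have hlt : Kstar < #(univ.image key) := by
    simpa [hproj] using lt_of_le_of_ne card_image_le (mt injOn_of_card_image_eq hnot_inj)
  exact (hmax ⟨r, hr_surj, hr_mem⟩).not_gt hlt

end BucketOrder

theorem maximal_bucket_order_min_dim_general {n : ℕ} (P : Equiv.Perm (Fin n) → ℝ)
    (hP1 : ∑ σ : Equiv.Perm (Fin n), P σ = 1)
    (Kstar : ℕ)
    (hmax : IsGreatest {K : ℕ | ∃ b : Fin n → Fin K,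
      Function.Surjective b ∧ MemBucketClass P b} Kstar)
    (bstar : Fin n → Fin Kstar) (hbstar_surj : Function.Surjective bstar)
    (hbstar_mem : MemBucketClass P bstar) :
    ∀ (K : ℕ) (b : Fin n → Fin K), Function.Surjective b →
      MemBucketClass P b →
      ¬(∀ i j : Fin n, b i < b j ↔ bstar i < bstar j) →
      bucketDim bstar < bucketDim b := by
  intro K b _ hb_mem hdiff
  have hfac := hb_mem.factorsThrough_of_maximal hmax.2 hbstar_surj hbstar_mem
  obtain ⟨i, j, hij, hbij⟩ := hfac.exists_ne_eq_of_not_lt_iff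
    (fun _ _ => hbstar_mem.le_of_lt hP1 hb_mem) hdiff
  exact Nat.sub_lt_sub_right (prod_pos fun _ _ => Nat.factorial_pos _)
    (hfac.prod_factorial_card_fiber_lt hbstar_surj hij hbij)

/-- Let `P` be a strongly/strictly stochastically transitive bucket
distribution, `K*` the maximal size of a bucket order whose class contains
`P`, and `b*` such a maximal bucket order.  Then any bucket order `C` with
`P ∈ 𝐏_C` which differs from `C*^{(K*,λ*)}` (i.e. induces a different strict
order `≺`) has strictly larger dimension `d_C > d_{C*}`. -/
theorem maximal_bucket_order_min_dim {n : ℕ} (P : Equiv.Perm (Fin n) → ℝ)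
    (hP0 : ∀ σ, 0 ≤ P σ) (hP1 : ∑ σ : Equiv.Perm (Fin n), P σ = 1)
    (hSST : ∀ i j k : Fin n, i ≠ j → k ≠ i → k ≠ j →
      1 / 2 ≤ pairwiseMarginal P i j →
      pairwiseMarginal P j k ≤ pairwiseMarginal P i k)
    (hstrict : ∀ i j : Fin n, i ≠ j → pairwiseMarginal P i j ≠ 1 / 2)
    (Kstar : ℕ) (hK2 : 2 ≤ Kstar)
    (hmax : IsGreatest {K : ℕ | ∃ b : Fin n → Fin K,
      Function.Surjective b ∧ MemBucketClass P b} Kstar)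
    (bstar : Fin n → Fin Kstar) (hbstar_surj : Function.Surjective bstar)
    (hbstar_mem : MemBucketClass P bstar) :
    ∀ (K : ℕ) (b : Fin n → Fin K), Function.Surjective b →
      MemBucketClass P b →
      ¬(∀ i j : Fin n, b i < b j ↔ bstar i < bstar j) →
      bucketDim bstar < bucketDim b :=
  maximal_bucket_order_min_dim_general P hP1 Kstar hmax bstar hbstar_surj hbstar_mem
end

section
/- Under the low-noise condition min_{i<j} |p_{i,j} − 1/2| ≥ h > 0 and strict/strong stochastic transitivity of P, the random variable D(C) = Σ_{i≠j} 𝟙{Σ(j)<Σ(i)}·(𝟙{i ≺_C j} − 𝟙{i ≺_{C*} j}), where C* = C*^{(K,λ)} is the optimal bucket order of shape λ, satisfies Var(D(C)) ≤ 2^{n(n−1)/2} (n²/h) · E[D(C)] for every bucket order C of shape λ. -/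
open Finset
open scoped Classical

/-- Copeland/Kemeny rank: `σ*_P(i) = 1 + #{j ≠ i : p_{i,j} < 1/2}`. -/
noncomputable def copelandRank {n : ℕ} (P : Equiv.Perm (Fin n) → ℝ)
    (i : Fin n) : ℕ :=
  1 + (Finset.univ.filter (fun j => j ≠ i ∧ pairwiseMarginal P i j < 1 / 2)).card

/-- The bucket order encoded by `b` has shape `lam`. -/
def HasShape {n K : ℕ} (b : Fin n → Fin K) (lam : Fin K → ℕ) : Prop :=
  ∀ k, (Finset.univ.filter (fun i => b i = k)).card = lam k

/-- `D(C) = Σ_{i≠j} 𝟙{Σ(j)<Σ(i)} (𝟙{i ≺_C j} - 𝟙{i ≺_{C*} j})`, as a function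
of the realization `σ` of `Σ`. -/
def Dvar {n K : ℕ} (b bstar : Fin n → Fin K) (σ : Equiv.Perm (Fin n)) : ℝ :=
  ∑ p ∈ Finset.univ.filter
      (fun p : Fin n × Fin n => p.1 ≠ p.2 ∧ σ p.2 < σ p.1),
    ((if b p.1 < b p.2 then (1 : ℝ) else 0) -
      (if bstar p.1 < bstar p.2 then (1 : ℝ) else 0))

/-!
Taking expectations, `E[D(C)] = Λ(C) - Λ(C*)` with `Λ(C) = Σ_{i ≺_C j} p_{j,i}`. Exchanging an
inverted pair `i, j` (Copeland-ranked `i` before `j`, but placed after it by `C`) lowers `Λ` by at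
least `p_{i,j} - p_{j,i} ≥ 2h`: the pair itself contributes exactly this, and by strong stochastic
transitivity no pair involving a third item gets worse. Hence a minimiser of `Λ` has no inversion,
so it is `C*`, and `E[D(C)] ≥ 2h` for every other `C` of shape `λ`. Since `|D(C)| ≤ n²`, we get
`Var(D(C)) ≤ n⁴ ≤ 2^{n(n-1)/2 + 1} n² ≤ 2^{n(n-1)/2} (n²/h) E[D(C)]`.
-/

def StronglyStochasticallyTransitive {n : ℕ} (P : Equiv.Perm (Fin n) → ℝ) : Prop :=
  ∀ i j k : Fin n, i ≠ j → k ≠ i → k ≠ j →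
    1 / 2 ≤ pairwiseMarginal P i j → pairwiseMarginal P j k ≤ pairwiseMarginal P i k

section Marginal

variable {n : ℕ} {P : Equiv.Perm (Fin n) → ℝ}

theorem pairwiseMarginal_add_pairwiseMarginal (hP1 : ∑ σ, P σ = 1) {i j : Fin n} (hij : i ≠ j) :
    pairwiseMarginal P i j + pairwiseMarginal P j i = 1 := by
  rw [pairwiseMarginal, pairwiseMarginal, ← sum_add_distrib, ← hP1]
  refine sum_congr rfl fun σ _ => ?_
  rcases (σ.injective.ne hij).lt_or_gt with h | h
  · simp [h, h.not_gt]
  · simp [h, h.not_gt]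

theorem copelandRank_lt_of_pairwiseMarginal_lt_half (hP1 : ∑ σ, P σ = 1)
    (hSST : StronglyStochasticallyTransitive P) {i j : Fin n} (hij : i ≠ j)
    (hlt : pairwiseMarginal P i j < 1 / 2) : copelandRank P j < copelandRank P i := by
  have hji : 1 / 2 ≤ pairwiseMarginal P j i := by
    linarith [pairwiseMarginal_add_pairwiseMarginal hP1 hij]
  have hsub : univ.filter (fun y => y ≠ j ∧ pairwiseMarginal P j y < 1 / 2) ⊂
      univ.filter (fun y => y ≠ i ∧ pairwiseMarginal P i y < 1 / 2) := by
    refine (ssubset_iff_of_subset fun y => ?_).2 ⟨j, by simpa [hij.symm] using hlt, by simp⟩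
    simp only [mem_filter, mem_univ, true_and]
    rintro ⟨hyj, hy⟩
    have hyi : y ≠ i := by rintro rfl; linarith
    exact ⟨hyi, (hSST j i y hij.symm hyj hyi hji).trans_lt hy⟩
  have := card_lt_card hsub
  unfold copelandRank
  omega

theorem half_lt_pairwiseMarginal_of_copelandRank_lt (hP1 : ∑ σ, P σ = 1)
    (hSST : StronglyStochasticallyTransitive P)
    (hstrict : ∀ i j : Fin n, i ≠ j → pairwiseMarginal P i j ≠ 1 / 2) {i j : Fin n}
    (hr : copelandRank P i < copelandRank P j) : 1 / 2 < pairwiseMarginal P i j := by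
  have hij : i ≠ j := ne_of_apply_ne _ hr.ne
  refine lt_of_le_of_ne (not_lt.1 fun hlt => ?_) (hstrict i j hij).symm
  exact (copelandRank_lt_of_pairwiseMarginal_lt_half hP1 hSST hij hlt).not_gt hr

theorem copelandRank_injective (hP1 : ∑ σ, P σ = 1) (hSST : StronglyStochasticallyTransitive P)
    (hstrict : ∀ i j : Fin n, i ≠ j → pairwiseMarginal P i j ≠ 1 / 2) :
    Function.Injective (copelandRank P) := by
  intro i j hr
  by_contra hij
  rcases (hstrict i j hij).lt_or_gt with hlt | hgt
  · exact (copelandRank_lt_of_pairwiseMarginal_lt_half hP1 hSST hij hlt).ne hr.symm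
  · have hlt : pairwiseMarginal P j i < 1 / 2 := by
      linarith [pairwiseMarginal_add_pairwiseMarginal hP1 hij]
    exact (copelandRank_lt_of_pairwiseMarginal_lt_half hP1 hSST (Ne.symm hij) hlt).ne hr

theorem two_mul_le_pairwiseMarginal_sub_of_copelandRank_lt (hP1 : ∑ σ, P σ = 1)
    (hSST : StronglyStochasticallyTransitive P)
    (hstrict : ∀ i j : Fin n, i ≠ j → pairwiseMarginal P i j ≠ 1 / 2) {h : ℝ}
    (hnoise : ∀ i j : Fin n, i < j → h ≤ |pairwiseMarginal P i j - 1 / 2|) {i j : Fin n}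
    (hr : copelandRank P i < copelandRank P j) :
    2 * h ≤ pairwiseMarginal P i j - pairwiseMarginal P j i := by
  have hij : i ≠ j := ne_of_apply_ne _ hr.ne
  have hsum := pairwiseMarginal_add_pairwiseMarginal hP1 hij
  have hhalf := half_lt_pairwiseMarginal_of_copelandRank_lt hP1 hSST hstrict hr
  have hnoise_ij : h ≤ |pairwiseMarginal P i j - 1 / 2| := by
    rcases hij.lt_or_gt with hlt | hgt
    · exact hnoise i j hlt
    · rw [show pairwiseMarginal P i j - 1 / 2 = -(pairwiseMarginal P j i - 1 / 2) by linarith,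
        abs_neg]
      exact hnoise j i hgt
  rw [abs_of_pos (by linarith)] at hnoise_ij
  linarith

theorem pairwiseMarginal_le_left_of_copelandRank_lt (hP1 : ∑ σ, P σ = 1)
    (hSST : StronglyStochasticallyTransitive P)
    (hstrict : ∀ i j : Fin n, i ≠ j → pairwiseMarginal P i j ≠ 1 / 2) {i j k : Fin n}
    (hr : copelandRank P i < copelandRank P j) (hki : k ≠ i) (hkj : k ≠ j) :
    pairwiseMarginal P j k ≤ pairwiseMarginal P i k :=
  hSST i j k (ne_of_apply_ne _ hr.ne) hki hkj
    (half_lt_pairwiseMarginal_of_copelandRank_lt hP1 hSST hstrict hr).le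

theorem pairwiseMarginal_le_right_of_copelandRank_lt (hP1 : ∑ σ, P σ = 1)
    (hSST : StronglyStochasticallyTransitive P)
    (hstrict : ∀ i j : Fin n, i ≠ j → pairwiseMarginal P i j ≠ 1 / 2) {i j k : Fin n}
    (hr : copelandRank P i < copelandRank P j) (hki : k ≠ i) (hkj : k ≠ j) :
    pairwiseMarginal P k i ≤ pairwiseMarginal P k j := by
  linarith [pairwiseMarginal_add_pairwiseMarginal hP1 hki,
    pairwiseMarginal_add_pairwiseMarginal hP1 hkj,
    pairwiseMarginal_le_left_of_copelandRank_lt hP1 hSST hstrict hr hki hkj]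

end Marginal

section BucketLoss

variable {α β : Type*} [Fintype α] [LinearOrder β]

def bucketLoss (q : α → α → ℝ) (c : α → β) : ℝ :=
  ∑ x, ∑ y, if c x < c y then q y x else 0

theorem bucketLoss_comp_perm (q : α → α → ℝ) (c : α → β) (τ : Equiv.Perm α) :
    bucketLoss q (c ∘ τ) = bucketLoss (fun x y => q (τ.symm x) (τ.symm y)) c := by
  symm
  rw [bucketLoss, bucketLoss, ← Equiv.sum_comp τ]
  refine sum_congr rfl fun x _ => ?_
  rw [← Equiv.sum_comp τ]
  simp

theorem sum_sum_eq_of_eq_zero_off_pair {M : Type*} [AddCommMonoid M] [DecidableEq α] {i j : α}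
    (hij : i ≠ j) (f : α → α → M)
    (hf : ∀ x y, x ≠ i → x ≠ j → y ≠ i → y ≠ j → f x y = 0) :
    ∑ x, ∑ y, f x y = (f i i + f i j) + (f j i + f j j) +
      ∑ y ∈ {i, j}ᶜ, (f i y + f j y) + ∑ x ∈ {i, j}ᶜ, (f x i + f x j) := by
  have hcompl : ∀ x ∈ ({i, j} : Finset α)ᶜ, x ≠ i ∧ x ≠ j := by simp
  have hrow (x : α) : ∑ y, f x y = (f x i + f x j) + ∑ y ∈ {i, j}ᶜ, f x y := by
    rw [← sum_add_sum_compl {i, j}, sum_pair hij]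
  have hrest : ∑ x ∈ ({i, j} : Finset α)ᶜ, ∑ y ∈ {i, j}ᶜ, f x y = 0 :=
    sum_eq_zero fun x hx => sum_eq_zero fun y hy =>
      hf x y (hcompl x hx).1 (hcompl x hx).2 (hcompl y hy).1 (hcompl y hy).2
  rw [← sum_add_sum_compl {i, j}, sum_pair hij, hrow i, hrow j]
  simp only [hrow, sum_add_distrib, hrest, add_zero]
  abel

theorem bucketLoss_comp_swap_add_le [DecidableEq α] {q : α → α → ℝ} {c : α → β} {δ : ℝ}
    {i j : α} (hij : i ≠ j) (hc : c j < c i) (hgap : δ ≤ q i j - q j i)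
    (hleft : ∀ k, k ≠ i → k ≠ j → q j k ≤ q i k)
    (hright : ∀ k, k ≠ i → k ≠ j → q k i ≤ q k j) :
    bucketLoss q (c ∘ Equiv.swap i j) + δ ≤ bucketLoss q c := by
  set τ := Equiv.swap i j
  have hdiff : bucketLoss q c - bucketLoss q (c ∘ τ) = ∑ x, ∑ y,
      if c x < c y then q y x - q (τ y) (τ x) else 0 := by
    rw [bucketLoss_comp_perm, Equiv.symm_swap, bucketLoss, bucketLoss, ← sum_sub_distrib]
    refine sum_congr rfl fun x _ => ?_
    rw [← sum_sub_distrib]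
    exact sum_congr rfl fun y _ => by split_ifs <;> ring
  have hτ : ∀ k, k ≠ i → k ≠ j → τ k = k := fun k => Equiv.swap_apply_of_ne_of_ne
  rw [sum_sum_eq_of_eq_zero_off_pair hij _ fun x y hxi hxj hyi hyj => by
    simp [hτ x hxi hxj, hτ y hyi hyj]] at hdiff
  have hcorner : δ ≤ (if c i < c i then q i i - q (τ i) (τ i) else 0) +
      (if c i < c j then q j i - q (τ j) (τ i) else 0) +
      ((if c j < c i then q i j - q (τ i) (τ j) else 0) +
      (if c j < c j then q j j - q (τ j) (τ j) else 0)) := by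
    simp [τ, hc, hc.not_gt, hgap]
  have hrows : 0 ≤ ∑ y ∈ {i, j}ᶜ, ((if c i < c y then q y i - q (τ y) (τ i) else 0) +
      (if c j < c y then q y j - q (τ y) (τ j) else 0)) := by
    refine sum_nonneg fun y hy => ?_
    have ⟨hyi, hyj⟩ : y ≠ i ∧ y ≠ j := by simpa [not_or] using hy
    simp only [τ, hτ y hyi hyj, Equiv.swap_apply_left, Equiv.swap_apply_right]
    by_cases hiy : c i < c y
    · rw [if_pos hiy, if_pos (hc.trans hiy)]
      linarith
    · have := hright y hyi hyj
      split_ifs <;> linarith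
  have hcols : 0 ≤ ∑ x ∈ {i, j}ᶜ, ((if c x < c i then q i x - q (τ i) (τ x) else 0) +
      (if c x < c j then q j x - q (τ j) (τ x) else 0)) := by
    refine sum_nonneg fun x hx => ?_
    have ⟨hxi, hxj⟩ : x ≠ i ∧ x ≠ j := by simpa [not_or] using hx
    simp only [τ, hτ x hxi hxj, Equiv.swap_apply_left, Equiv.swap_apply_right]
    by_cases hxj' : c x < c j
    · rw [if_pos (hxj'.trans hc), if_pos hxj']
      linarith
    · have := hleft x hxi hxj
      split_ifs <;> linarith
  linarith

end BucketLoss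

section Shape

variable {n K : ℕ} {lam : Fin K → ℕ}

theorem HasShape.comp_perm {c : Fin n → Fin K} (hc : HasShape c lam) (τ : Equiv.Perm (Fin n)) :
    HasShape (c ∘ τ) lam := fun k => by
  rw [← hc k]
  exact card_equiv τ (by simp)

theorem HasShape.card_filter_le {c : Fin n → Fin K} (hc : HasShape c lam) (k : Fin K) :
    #(univ.filter fun x => c x ≤ k) = ∑ l ∈ univ.filter (· ≤ k), lam l := by
  rw [card_eq_sum_card_fiberwise (f := c) (t := univ.filter (· ≤ k)) (by intro x; simp)]
  refine sum_congr rfl fun l hl => ?_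
  rw [← hc l, filter_filter]
  congr 1
  ext x
  simp only [mem_filter, mem_univ, true_and] at hl ⊢
  exact ⟨And.right, fun hx => ⟨hx ▸ hl, hx⟩⟩

theorem monotone_of_mem_cumulative_bounds {r : Fin n → ℕ} {bstar : Fin n → Fin K}
    (hbstar : ∀ i, ∑ l ∈ univ.filter (· < bstar i), lam l < r i ∧
      r i ≤ ∑ l ∈ univ.filter (· ≤ bstar i), lam l) {x y : Fin n} (hxy : r x < r y) :
    bstar x ≤ bstar y := by
  by_contra! hlt
  have hsub : ∑ l ∈ univ.filter (· ≤ bstar y), lam l ≤ ∑ l ∈ univ.filter (· < bstar x), lam l := by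
    refine sum_le_sum_of_subset fun l => ?_
    simp only [mem_filter, mem_univ, true_and]
    exact fun hl => hl.trans_lt hlt
  have := (hbstar x).1
  have := (hbstar y).2
  omega

variable {γ : Type*} [LinearOrder γ] {r : Fin n → γ}

theorem le_of_hasShape_of_monotone (hr : Function.Injective r) {b c : Fin n → Fin K}
    (hb : HasShape b lam) (hc : HasShape c lam) (hbm : ∀ x y, r x < r y → b x ≤ b y)
    (hcm : ∀ x y, r x < r y → c x ≤ c y) (x : Fin n) : c x ≤ b x := by
  by_contra! hlt
  have hsub : univ.filter (fun y => c y ≤ b x) ⊆ (univ.filter fun y => b y ≤ b x).erase x := by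
    intro y
    simp only [mem_filter, mem_univ, true_and, mem_erase]
    intro hy
    have hyx : y ≠ x := by rintro rfl; exact hy.not_gt hlt
    refine ⟨hyx, ?_⟩
    rcases (hr.ne hyx).lt_or_gt with hry | hry
    · exact hbm y x hry
    · exact absurd ((hcm x y hry).trans hy) hlt.not_ge
  have := card_le_card hsub
  rw [card_erase_of_mem (by simp), hb.card_filter_le, hc.card_filter_le] at this
  have : 0 < ∑ l ∈ univ.filter (· ≤ b x), lam l := by
    rw [← hb.card_filter_le]
    exact card_pos.2 ⟨x, by simp⟩
  omega

theorem eq_of_hasShape_of_monotone (hr : Function.Injective r) {b c : Fin n → Fin K}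
    (hb : HasShape b lam) (hc : HasShape c lam) (hbm : ∀ x y, r x < r y → b x ≤ b y)
    (hcm : ∀ x y, r x < r y → c x ≤ c y) : b = c :=
  funext fun x => le_antisymm (le_of_hasShape_of_monotone hr hc hb hcm hbm x)
    (le_of_hasShape_of_monotone hr hb hc hbm hcm x)

variable {q : Fin n → Fin n → ℝ} {δ : ℝ}

theorem exists_hasShape_bucketLoss_add_le (hgap : ∀ i j, r i < r j → δ ≤ q i j - q j i)
    (hleft : ∀ i j k, r i < r j → k ≠ i → k ≠ j → q j k ≤ q i k)
    (hright : ∀ i j k, r i < r j → k ≠ i → k ≠ j → q k i ≤ q k j) {c : Fin n → Fin K}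
    (hc : HasShape c lam) (hcm : ¬ ∀ x y, r x < r y → c x ≤ c y) :
    ∃ d, HasShape d lam ∧ bucketLoss q d + δ ≤ bucketLoss q c := by
  push Not at hcm
  obtain ⟨i, j, hr, hji⟩ := hcm
  exact ⟨c ∘ Equiv.swap i j, hc.comp_perm _, bucketLoss_comp_swap_add_le (ne_of_apply_ne r hr.ne)
    hji (hgap i j hr) (hleft i j · hr) (hright i j · hr)⟩

theorem eq_or_bucketLoss_add_le (hr : Function.Injective r) (hδ : 0 < δ)
    (hgap : ∀ i j, r i < r j → δ ≤ q i j - q j i)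
    (hleft : ∀ i j k, r i < r j → k ≠ i → k ≠ j → q j k ≤ q i k)
    (hright : ∀ i j k, r i < r j → k ≠ i → k ≠ j → q k i ≤ q k j) {bstar c : Fin n → Fin K}
    (hbstar : HasShape bstar lam) (hbstar_mono : ∀ x y, r x < r y → bstar x ≤ bstar y)
    (hc : HasShape c lam) : c = bstar ∨ bucketLoss q bstar + δ ≤ bucketLoss q c := by
  obtain ⟨m, hm, hmin⟩ := (univ.filter fun d : Fin n → Fin K => HasShape d lam).exists_min_image
    (bucketLoss q) ⟨bstar, by simpa using hbstar⟩
  simp only [mem_filter, mem_univ, true_and] at hm hmin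
  have hm_mono : ∀ x y, r x < r y → m x ≤ m y := by
    by_contra hnot
    obtain ⟨d, hd, hlt⟩ := exists_hasShape_bucketLoss_add_le hgap hleft hright hm hnot
    linarith [hmin d hd]
  obtain rfl := eq_of_hasShape_of_monotone hr hm hbstar hm_mono hbstar_mono
  by_cases hcm : ∀ x y, r x < r y → c x ≤ c y
  · exact .inl (eq_of_hasShape_of_monotone hr hc hm hcm hm_mono)
  · obtain ⟨d, hd, hlt⟩ := exists_hasShape_bucketLoss_add_le hgap hleft hright hc hcm
    exact .inr (by linarith [hmin d hd])

end Shape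

section Disagreements

variable {n K : ℕ}

def disagreements (c : Fin n → Fin K) (σ : Equiv.Perm (Fin n)) : ℝ :=
  ∑ x, ∑ y, if c x < c y ∧ σ y < σ x then 1 else 0

theorem Dvar_eq_sub (b bstar : Fin n → Fin K) (σ : Equiv.Perm (Fin n)) :
    Dvar b bstar σ = disagreements b σ - disagreements bstar σ := by
  rw [Dvar, sum_filter, Fintype.sum_prod_type, disagreements, disagreements,
    ← sum_sub_distrib]
  refine sum_congr rfl fun x _ => ?_
  rw [← sum_sub_distrib]
  refine sum_congr rfl fun y _ => ?_
  by_cases hxy : x = y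
  · simp [hxy]
  · by_cases hσ : σ y < σ x <;> simp [hxy, hσ]

theorem disagreements_nonneg (c : Fin n → Fin K) (σ : Equiv.Perm (Fin n)) :
    0 ≤ disagreements c σ :=
  sum_nonneg fun _ _ => sum_nonneg fun _ _ => by positivity

theorem disagreements_le (c : Fin n → Fin K) (σ : Equiv.Perm (Fin n)) :
    disagreements c σ ≤ (n : ℝ) ^ 2 := by
  calc disagreements c σ ≤ ∑ _x : Fin n, ∑ _y : Fin n, (1 : ℝ) :=
        sum_le_sum fun _ _ => sum_le_sum fun _ _ => by split_ifs <;> norm_num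
    _ = (n : ℝ) ^ 2 := by simp [sq]

theorem abs_Dvar_le (b bstar : Fin n → Fin K) (σ : Equiv.Perm (Fin n)) :
    |Dvar b bstar σ| ≤ (n : ℝ) ^ 2 := by
  rw [Dvar_eq_sub]
  exact abs_sub_le_of_nonneg_of_le (disagreements_nonneg b σ) (disagreements_le b σ)
    (disagreements_nonneg bstar σ) (disagreements_le bstar σ)

theorem sum_mul_disagreements (P : Equiv.Perm (Fin n) → ℝ) (c : Fin n → Fin K) :
    ∑ σ, P σ * disagreements c σ = bucketLoss (pairwiseMarginal P) c := by
  simp only [disagreements, bucketLoss, pairwiseMarginal, mul_sum]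
  rw [sum_comm]
  refine sum_congr rfl fun x _ => ?_
  rw [sum_comm]
  refine sum_congr rfl fun y _ => ?_
  split_ifs with hc
  · exact sum_congr rfl fun σ _ => by simp [hc]
  · simp [hc]

theorem sum_mul_Dvar (P : Equiv.Perm (Fin n) → ℝ) (b bstar : Fin n → Fin K) :
    ∑ σ, P σ * Dvar b bstar σ =
      bucketLoss (pairwiseMarginal P) b - bucketLoss (pairwiseMarginal P) bstar := by
  simp only [Dvar_eq_sub, mul_sub, sum_sub_distrib, sum_mul_disagreements]

end Disagreements

theorem sum_mul_sq_sub_sq_sum_mul_le {Ω : Type*} [Fintype Ω] {P X : Ω → ℝ}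
    (hP0 : ∀ ω, 0 ≤ P ω) (hP1 : ∑ ω, P ω = 1) {M : ℝ} (hX : ∀ ω, |X ω| ≤ M) :
    ∑ ω, P ω * X ω ^ 2 - (∑ ω, P ω * X ω) ^ 2 ≤ M ^ 2 :=
  calc ∑ ω, P ω * X ω ^ 2 - (∑ ω, P ω * X ω) ^ 2 ≤ ∑ ω, P ω * X ω ^ 2 :=
        sub_le_self _ (sq_nonneg _)
    _ ≤ ∑ ω, P ω * M ^ 2 := sum_le_sum fun ω _ =>
        mul_le_mul_of_nonneg_left (sq_le_sq' (abs_le.1 (hX ω)).1 (abs_le.1 (hX ω)).2) (hP0 ω)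
    _ = M ^ 2 := by rw [← sum_mul, hP1, one_mul]

theorem sq_le_two_pow_mul_pred_div_two_add_one (n : ℕ) : n ^ 2 ≤ 2 ^ (n * (n - 1) / 2 + 1) := by
  rcases n with _ | m
  · simp
  have hm : m + 1 ≤ 2 ^ m := Nat.lt_two_pow_self
  have hexp : 2 * m ≤ (m + 1) * m / 2 + 1 := by
    have : 4 * m ≤ (m + 1) * m + 2 := by
      rcases le_or_gt m 1 with h | h
      · interval_cases m <;> simp
      · nlinarith
    omega
  calc (m + 1) ^ 2 ≤ (2 ^ m) ^ 2 := Nat.pow_le_pow_left hm 2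
    _ = 2 ^ (2 * m) := by rw [← pow_mul, mul_comm]
    _ ≤ _ := Nat.pow_le_pow_right (by norm_num) (by simpa using hexp)

theorem variance_control_general {n K : ℕ} (P : Equiv.Perm (Fin n) → ℝ)
    (hP0 : ∀ σ, 0 ≤ P σ) (hP1 : ∑ σ : Equiv.Perm (Fin n), P σ = 1)
    (hSST : ∀ i j k : Fin n, i ≠ j → k ≠ i → k ≠ j →
      1 / 2 ≤ pairwiseMarginal P i j →
      pairwiseMarginal P j k ≤ pairwiseMarginal P i k)
    (hstrict : ∀ i j : Fin n, i ≠ j → pairwiseMarginal P i j ≠ 1 / 2)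
    (h : ℝ) (hh : 0 < h)
    (hnoise : ∀ i j : Fin n, i < j → h ≤ |pairwiseMarginal P i j - 1 / 2|)
    (lam : Fin K → ℕ)
    (bstar : Fin n → Fin K) (hbstar_shape : HasShape bstar lam)
    (hbstar : ∀ (i : Fin n) (k : Fin K), bstar i = k ↔
      (∑ l ∈ Finset.univ.filter (fun l => l < k), lam l) < copelandRank P i ∧
        copelandRank P i ≤ ∑ l ∈ Finset.univ.filter (fun l => l ≤ k), lam l)
    (b : Fin n → Fin K) (hb : HasShape b lam) :
    (∑ σ : Equiv.Perm (Fin n), P σ * (Dvar b bstar σ) ^ 2) -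
        (∑ σ : Equiv.Perm (Fin n), P σ * Dvar b bstar σ) ^ 2 ≤
      2 ^ (n * (n - 1) / 2) * ((n : ℝ) ^ 2 / h) *
        ∑ σ : Equiv.Perm (Fin n), P σ * Dvar b bstar σ := by
  rcases eq_or_bucketLoss_add_le (copelandRank_injective hP1 hSST hstrict) (by positivity)
    (fun _ _ => two_mul_le_pairwiseMarginal_sub_of_copelandRank_lt hP1 hSST hstrict hnoise)
    (fun _ _ _ => pairwiseMarginal_le_left_of_copelandRank_lt hP1 hSST hstrict)
    (fun _ _ _ => pairwiseMarginal_le_right_of_copelandRank_lt hP1 hSST hstrict) hbstar_shape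
    (fun _ _ => monotone_of_mem_cumulative_bounds (fun i => (hbstar i _).1 rfl)) hb
    with rfl | hgap
  · simp [Dvar]
  have hE : 2 * h ≤ ∑ σ, P σ * Dvar b bstar σ := by rw [sum_mul_Dvar]; linarith
  have hpow : ((n : ℝ) ^ 2) ≤ 2 ^ (n * (n - 1) / 2 + 1) := by
    exact_mod_cast sq_le_two_pow_mul_pred_div_two_add_one n
  calc _ ≤ ((n : ℝ) ^ 2) ^ 2 := sum_mul_sq_sub_sq_sum_mul_le hP0 hP1 (abs_Dvar_le b bstar)
    _ ≤ 2 ^ (n * (n - 1) / 2 + 1) * (n : ℝ) ^ 2 := by rw [sq]; gcongr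
    _ = 2 ^ (n * (n - 1) / 2) * ((n : ℝ) ^ 2 / h) * (2 * h) := by field_simp; ring
    _ ≤ _ := by gcongr

/-- Under strong/strict stochastic transitivity and the low-noise condition
`min_{i<j} |p_{i,j} - 1/2| ≥ h > 0`, with `C* = C*^{(K,λ)}` the optimal bucket
order of shape `λ` (the `λ`-segmentation of the Kemeny ranking), one has
`Var(D(C)) ≤ 2^{n(n-1)/2} (n²/h) E[D(C)]` for every bucket order `C` of
shape `λ`. -/
theorem variance_control {n K : ℕ} (P : Equiv.Perm (Fin n) → ℝ)
    (hP0 : ∀ σ, 0 ≤ P σ) (hP1 : ∑ σ : Equiv.Perm (Fin n), P σ = 1)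
    (hSST : ∀ i j k : Fin n, i ≠ j → k ≠ i → k ≠ j →
      1 / 2 ≤ pairwiseMarginal P i j →
      pairwiseMarginal P j k ≤ pairwiseMarginal P i k)
    (hstrict : ∀ i j : Fin n, i ≠ j → pairwiseMarginal P i j ≠ 1 / 2)
    (h : ℝ) (hh : 0 < h)
    (hnoise : ∀ i j : Fin n, i < j → h ≤ |pairwiseMarginal P i j - 1 / 2|)
    (lam : Fin K → ℕ) (hlam : ∀ k, 1 ≤ lam k) (hsum : ∑ k, lam k = n)
    (bstar : Fin n → Fin K) (hbstar_shape : HasShape bstar lam)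
    (hbstar : ∀ (i : Fin n) (k : Fin K), bstar i = k ↔
      (∑ l ∈ Finset.univ.filter (fun l => l < k), lam l) < copelandRank P i ∧
        copelandRank P i ≤ ∑ l ∈ Finset.univ.filter (fun l => l ≤ k), lam l)
    (b : Fin n → Fin K) (hb : HasShape b lam) :
    (∑ σ : Equiv.Perm (Fin n), P σ * (Dvar b bstar σ) ^ 2) -
        (∑ σ : Equiv.Perm (Fin n), P σ * Dvar b bstar σ) ^ 2 ≤
      2 ^ (n * (n - 1) / 2) * ((n : ℝ) ^ 2 / h) *
        ∑ σ : Equiv.Perm (Fin n), P σ * Dvar b bstar σ :=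
  variance_control_general P hP0 hP1 hSST hstrict h hh hnoise lam bstar hbstar_shape hbstar b hb
end
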